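/- Let G=(V,E) be an undirected graph, t ∈ V, and define I_t and H_t as usual. Then for any sets A, B ⊆ V, letting N∩ = (A ∩ I_t(B)) ∪ (B ∩ I_t(A)) ∪ (A ∩ B), we have H_t(N∩) = H_t(A) ∩ H_t(B). -/

import Mathlib

open Finset

variable {V : Type*}

/-- `N` is a vertex cut between `S` and `T`: every walk from a vertex of `S` to a
vertex of `T` contains a vertex of `N` (which may belong to `S ∪ T`). -/
def IsCut (G : SimpleGraph V) (S T N : Set V) : Prop :=
  ∀ s ∈ S, ∀ t ∈ T, ∀ p : G.Walk s t, ∃ u ∈ p.support, u ∈ N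

/-- The interior `I_t(N)`: vertices outside `N` from which every walk to `t`
passes through `N` (i.e. no path to `t` exists after deleting `N`). -/
def interiorSet (G : SimpleGraph V) (t : V) (N : Set V) : Set V :=
  {v | v ∉ N ∧ ∀ p : G.Walk v t, ∃ u ∈ p.support, u ∈ N}

/-- `H_t(N) = N ∪ I_t(N)`. -/
def hullSet (G : SimpleGraph V) (t : V) (N : Set V) : Set V :=
  N ∪ interiorSet G t N

/-- The minimum weight of a vertex cut between `S` and `T`. -/
noncomputable def sep [Fintype V] (G : SimpleGraph V) (w : V → ℝ) (S T : Set V) : ℝ :=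
  sInf {x : ℝ | ∃ N : Finset V, IsCut G S T ↑N ∧ x = ∑ v ∈ N, w v}

/-!
A vertex lies in `H_t(N)` iff every walk from it to `t` meets `N`, so `H_t` is a closure
operator. Every vertex of `N∩` lies in both hulls, which gives `⊆`. Conversely, walk from a
vertex of `H_t(A) ∩ H_t(B)` towards `t`: as long as the walk avoids `A ∪ B`, both hull
memberships pass to the next vertex, and the first vertex in `A ∪ B` lies in `N∩`.
-/

namespace SimpleGraph

variable (G : SimpleGraph V) (t : V)

lemma mem_hullSet_iff {N : Set V} {v : V} :
    v ∈ hullSet G t N ↔ ∀ p : G.Walk v t, ∃ u ∈ p.support, u ∈ N := by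
  refine ⟨?_, fun h => (em (v ∈ N)).imp id fun hv => ⟨hv, h⟩⟩
  rintro (hv | ⟨_, hv⟩) p
  · exact ⟨v, p.start_mem_support, hv⟩
  · exact hv p

lemma hullSet_subset_of_subset_hullSet {M N : Set V} (h : N ⊆ hullSet G t M) :
    hullSet G t N ⊆ hullSet G t M := by
  classical
  intro v hv
  rw [mem_hullSet_iff] at hv ⊢
  intro p
  obtain ⟨u, hu, huN⟩ := hv p
  obtain ⟨w, hw, hwM⟩ := (mem_hullSet_iff G t).1 (h huN) (p.dropUntil u hu)
  exact ⟨w, p.support_dropUntil_subset_support hu hw, hwM⟩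

lemma mem_of_mem_hullSet_self {N : Set V} (h : t ∈ hullSet G t N) : t ∈ N := by
  simpa using (mem_hullSet_iff G t).1 h .nil

lemma mem_hullSet_of_adj {N : Set V} {v w : V} (hv : v ∈ hullSet G t N) (hvN : v ∉ N)
    (hvw : G.Adj v w) : w ∈ hullSet G t N := by
  rw [mem_hullSet_iff] at hv ⊢
  intro p
  obtain ⟨u, hu, huN⟩ := hv (.cons hvw p)
  rcases List.mem_cons.1 (Walk.support_cons hvw p ▸ hu) with rfl | hu
  · exact absurd huN hvN
  · exact ⟨u, hu, huN⟩

variable {G t} {A B : Set V}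

lemma mem_cap_of_mem_union {v : V} (hA : v ∈ hullSet G t A) (hB : v ∈ hullSet G t B)
    (hv : v ∈ A ∪ B) :
    v ∈ (A ∩ interiorSet G t B) ∪ (B ∩ interiorSet G t A) ∪ (A ∩ B) := by
  by_cases hvA : v ∈ A <;> by_cases hvB : v ∈ B
  · exact Or.inr ⟨hvA, hvB⟩
  · exact Or.inl (Or.inl ⟨hvA, hB.resolve_left hvB⟩)
  · exact Or.inl (Or.inr ⟨hvB, hA.resolve_left hvA⟩)
  · exact absurd hv (by simp [hvA, hvB])

lemma Walk.exists_mem_support_cap {v : V} (p : G.Walk v t) (hA : v ∈ hullSet G t A)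
    (hB : v ∈ hullSet G t B) :
    ∃ u ∈ p.support, u ∈ (A ∩ interiorSet G t B) ∪ (B ∩ interiorSet G t A) ∪ (A ∩ B) := by
  induction p with
  | nil =>
    exact ⟨_, List.mem_singleton_self _, mem_cap_of_mem_union hA hB
      (Or.inl (mem_of_mem_hullSet_self G _ hA))⟩
  | @cons v w _ hvw q ih =>
    by_cases hv : v ∈ A ∪ B
    · exact ⟨v, Walk.start_mem_support _, mem_cap_of_mem_union hA hB hv⟩
    · rw [Set.mem_union, not_or] at hv
      obtain ⟨u, hu, huN⟩ :=
        ih (mem_hullSet_of_adj G _ hA hv.1 hvw) (mem_hullSet_of_adj G _ hB hv.2 hvw)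
      exact ⟨u, List.mem_cons_of_mem _ hu, huN⟩

end SimpleGraph

open SimpleGraph in
theorem hull_of_cap_cut_general (G : SimpleGraph V) (t : V) (A B : Set V) :
    hullSet G t ((A ∩ interiorSet G t B) ∪ (B ∩ interiorSet G t A) ∪ (A ∩ B))
      = hullSet G t A ∩ hullSet G t B := by
  refine subset_antisymm (Set.subset_inter ?_ ?_) fun v ⟨hA, hB⟩ =>
    (mem_hullSet_iff G t).2 fun p => p.exists_mem_support_cap hA hB
  · refine hullSet_subset_of_subset_hullSet G t fun v hv => ?_
    rcases hv with (⟨hA, -⟩ | ⟨-, hIA⟩) | ⟨hA, -⟩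
    exacts [Or.inl hA, Or.inr hIA, Or.inl hA]
  · refine hullSet_subset_of_subset_hullSet G t fun v hv => ?_
    rcases hv with (⟨-, hIB⟩ | ⟨hB, -⟩) | ⟨-, hB⟩
    exacts [Or.inr hIB, Or.inl hB, Or.inl hB]

theorem hull_of_cap_cut [Fintype V] (G : SimpleGraph V) (t : V) (A B : Set V) :
    hullSet G t ((A ∩ interiorSet G t B) ∪ (B ∩ interiorSet G t A) ∪ (A ∩ B))
      = hullSet G t A ∩ hullSet G t B :=
  hull_of_cap_cut_general G t A B
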